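/- arXiv:2507.05055 — 8 statements merged into one kernel-verified Lean document; each statement's English description precedes it below -/
import Mathlib

section
/- Let L ≥ 2 and let m be an integer with 0 < m < L. Then the sum over all partial matchings D of {1,…,L} of the crossing number S_m(D) equals m·(L−m)·T(L−2). Equivalently, the average crossing number at bond m over the uniform distribution on all partial matchings of {1,…,L} equals m·(L−m)·T(L−2)/T(L). -/
/-- Telephone (involution) numbers: `T 0 = T 1 = 1`, `T (n+2) = T (n+1) + (n+1) * T n`. -/
def telephone : ℕ → ℕ
  | 0 => 1
  | 1 => 1
  | n + 2 => telephone (n + 1) + (n + 1) * telephone n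

/-- A partial matching of `{1,…,L}`: a set of pairwise disjoint two-element
subsets of `{1,…,L}`. -/
def IsPartialMatching (L : ℕ) (D : Finset (Finset ℕ)) : Prop :=
  (∀ e ∈ D, e.card = 2) ∧ (∀ e ∈ D, e ⊆ Finset.Icc 1 L) ∧
    ∀ e ∈ D, ∀ f ∈ D, e ≠ f → Disjoint e f

open Classical in
/-- The finset of all partial matchings of `{1,…,L}`. -/
noncomputable def matchings (L : ℕ) : Finset (Finset (Finset ℕ)) :=
  ((Finset.Icc 1 L).powerset.powerset).filter (IsPartialMatching L)

open Classical in
/-- The crossing number of a partial matching at bond `m`: the number of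
pairs `{a, b} ∈ D` with `a ≤ m < b`. -/
noncomputable def crossing (m : ℕ) (D : Finset (Finset ℕ)) : ℕ :=
  (D.filter fun e => ∃ a ∈ e, ∃ b ∈ e, a ≤ m ∧ m < b).card


open Finset

open Classical in
noncomputable def matchingsOf (s : Finset ℕ) : Finset (Finset (Finset ℕ)) :=
  (s.powerset.powerset).filter fun D =>
    (∀ e ∈ D, e.card = 2) ∧ ∀ e ∈ D, ∀ f ∈ D, e ≠ f → Disjoint e f

lemma mem_matchingsOf {s : Finset ℕ} {D : Finset (Finset ℕ)} :
    D ∈ matchingsOf s ↔ (∀ e ∈ D, e ⊆ s) ∧ (∀ e ∈ D, e.card = 2) ∧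
      ∀ e ∈ D, ∀ f ∈ D, e ≠ f → Disjoint e f := by
  classical
  simp only [matchingsOf, mem_filter, mem_powerset]
  constructor
  · rintro ⟨h1, h2, h3⟩
    exact ⟨fun e he => mem_powerset.mp (h1 he), h2, h3⟩
  · rintro ⟨h1, h2, h3⟩
    exact ⟨fun e he => mem_powerset.mpr (h1 e he), h2, h3⟩

lemma card_filter_edge (s : Finset ℕ) (e : Finset ℕ) (he2 : e.card = 2) (hes : e ⊆ s) :
    ((matchingsOf s).filter fun D => e ∈ D).card = (matchingsOf (s \ e)).card := by
  classical
  have hene : e ≠ ∅ := by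
    intro h; rw [h] at he2; simp at he2
  refine Finset.card_bij' (fun D _ => D.erase e) (fun D _ => insert e D) ?_ ?_ ?_ ?_
  · intro D hD
    rw [mem_filter] at hD
    obtain ⟨hD, heD⟩ := hD
    rw [mem_matchingsOf] at hD ⊢
    obtain ⟨hsub, hcard, hdisj⟩ := hD
    refine ⟨?_, fun f hf => hcard f (mem_of_mem_erase hf), ?_⟩
    · intro f hf
      rw [subset_sdiff]
      exact ⟨hsub f (mem_of_mem_erase hf),
        hdisj f (mem_of_mem_erase hf) e heD (ne_of_mem_erase hf)⟩
    · intro f hf g hg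
      exact hdisj f (mem_of_mem_erase hf) g (mem_of_mem_erase hg)
  · intro D hD
    rw [mem_matchingsOf] at hD
    obtain ⟨hsub, hcard, hdisj⟩ := hD
    show insert e D ∈ _
    rw [mem_filter, mem_matchingsOf]
    refine ⟨⟨?_, ?_, ?_⟩, mem_insert_self e D⟩
    · intro f hf
      rcases mem_insert.mp hf with hfe | hf
      · rw [hfe]; exact hes
      · exact (subset_sdiff.mp (hsub f hf)).1
    · intro f hf
      rcases mem_insert.mp hf with hfe | hf
      · rw [hfe]; exact he2
      · exact hcard f hf
    · intro f hf g hg hfg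
      rcases mem_insert.mp hf with hfe | hf <;> rcases mem_insert.mp hg with hge | hg
      · exact absurd (hfe.trans hge.symm) hfg
      · rw [hfe]; exact ((subset_sdiff.mp (hsub g hg)).2).symm
      · rw [hge]; exact (subset_sdiff.mp (hsub f hf)).2
      · exact hdisj f hf g hg hfg
  · intro D hD
    rw [mem_filter] at hD
    exact Finset.insert_erase hD.2
  · intro D hD
    rw [mem_matchingsOf] at hD
    apply erase_insert
    intro heD
    have := (subset_sdiff.mp (hD.1 e heD)).2
    exact hene (disjoint_self.mp this)

lemma matchings_eq (L : ℕ) : matchings L = matchingsOf (Finset.Icc 1 L) := by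
  ext D
  simp only [matchings, IsPartialMatching, mem_filter, mem_powerset, mem_matchingsOf]
  constructor
  · rintro ⟨_, h1, h2, h3⟩; exact ⟨h2, h1, h3⟩
  · rintro ⟨h2, h1, h3⟩
    exact ⟨fun e he => mem_powerset.mpr (h2 e he), h1, h2, h3⟩


lemma exists_pair_eq {e : Finset ℕ} (he2 : e.card = 2) {x : ℕ} (hx : x ∈ e) :
    ∃ y, y ≠ x ∧ e = {x, y} := by
  obtain ⟨a, b, hab, rfl⟩ := Finset.card_eq_two.mp he2
  rcases Finset.mem_insert.mp hx with rfl | hb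
  · exact ⟨b, Ne.symm hab, rfl⟩
  · rw [Finset.mem_singleton] at hb
    subst hb
    exact ⟨a, hab, Finset.pair_comm a x⟩

lemma pair_card_two {x y : ℕ} (h : y ≠ x) : ({x, y} : Finset ℕ).card = 2 := by
  rw [Finset.card_insert_of_notMem (fun hmem => h (Finset.mem_singleton.mp hmem).symm),
    Finset.card_singleton]

lemma card_matchingsOf : ∀ (n : ℕ) (s : Finset ℕ), s.card = n →
    (matchingsOf s).card = telephone n := by
  intro n
  induction n using Nat.strong_induction_on with
  | _ n ih =>
    intro s hs
    rcases Nat.eq_zero_or_pos n with rfl | hn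
    · rw [Finset.card_eq_zero] at hs
      subst hs
      have hm : matchingsOf ∅ = {∅} := by
        ext D
        simp only [mem_matchingsOf, Finset.mem_singleton]
        constructor
        · rintro ⟨h1, h2, _⟩
          by_contra hD
          obtain ⟨e, he⟩ := Finset.nonempty_iff_ne_empty.mpr hD
          have hsub := h1 e he
          have h2e := h2 e he
          rw [Finset.subset_empty] at hsub
          rw [hsub] at h2e
          simp at h2e
        · rintro rfl
          exact ⟨by simp, by simp, by simp⟩
      rw [hm]
      rfl
    · have hne : s.Nonempty := by rw [← Finset.card_pos, hs]; exact hn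
      obtain ⟨x, hx⟩ := hne
      classical
      have hsplit : (matchingsOf s).card =
          ((matchingsOf s).filter fun D => ∃ e ∈ D, x ∈ e).card +
          ((matchingsOf s).filter fun D => ¬ ∃ e ∈ D, x ∈ e).card :=
        (Finset.card_filter_add_card_filter_not _).symm
      have h1 : ((matchingsOf s).filter fun D => ¬ ∃ e ∈ D, x ∈ e) =
          matchingsOf (s.erase x) := by
        ext D
        simp only [Finset.mem_filter, mem_matchingsOf]
        constructor
        · rintro ⟨⟨hsub, hcard, hdisj⟩, hnx⟩
          refine ⟨fun e he => ?_, hcard, hdisj⟩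
          exact Finset.subset_erase.mpr ⟨hsub e he, fun hxe => hnx ⟨e, he, hxe⟩⟩
        · rintro ⟨hsub, hcard, hdisj⟩
          refine ⟨⟨fun e he => (Finset.subset_erase.mp (hsub e he)).1, hcard, hdisj⟩, ?_⟩
          rintro ⟨e, he, hxe⟩
          exact (Finset.subset_erase.mp (hsub e he)).2 hxe
      have h2 : ((matchingsOf s).filter fun D => ∃ e ∈ D, x ∈ e) =
          (s.erase x).biUnion fun y =>
            (matchingsOf s).filter fun D => ({x, y} : Finset ℕ) ∈ D := by
        ext D
        simp only [Finset.mem_filter, Finset.mem_biUnion]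
        constructor
        · rintro ⟨hD, e, he, hxe⟩
          obtain ⟨hsub, hcard, hdisj⟩ := mem_matchingsOf.mp hD
          obtain ⟨y, hyx, rfl⟩ := exists_pair_eq (hcard e he) hxe
          refine ⟨y, Finset.mem_erase.mpr ⟨hyx, hsub _ he (by simp)⟩, hD, he⟩
        · rintro ⟨y, _, hD, he⟩
          exact ⟨hD, {x, y}, he, by simp⟩
      have hdisjU : ∀ y ∈ s.erase x, ∀ z ∈ s.erase x, y ≠ z →
          Disjoint ((matchingsOf s).filter fun D => ({x, y} : Finset ℕ) ∈ D)
            ((matchingsOf s).filter fun D => ({x, z} : Finset ℕ) ∈ D) := by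
        intro y hy z hz hyz
        rw [Finset.disjoint_left]
        intro D hDy hDz
        rw [Finset.mem_filter] at hDy hDz
        obtain ⟨hD, hey⟩ := hDy
        obtain ⟨_, hez⟩ := hDz
        obtain ⟨_, _, hdisj⟩ := mem_matchingsOf.mp hD
        have heq : ({x, y} : Finset ℕ) = {x, z} := by
          by_contra hne
          have := hdisj _ hey _ hez hne
          rw [Finset.disjoint_left] at this
          exact this (Finset.mem_insert_self x {y}) (Finset.mem_insert_self x {z})
        have : y ∈ ({x, z} : Finset ℕ) := heq ▸ (by simp : y ∈ ({x, y} : Finset ℕ))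
        rcases Finset.mem_insert.mp this with h | h
        · exact (Finset.mem_erase.mp hy).1 h
        · exact hyz (Finset.mem_singleton.mp h)
      have hterm : ∀ y ∈ s.erase x,
          ((matchingsOf s).filter fun D => ({x, y} : Finset ℕ) ∈ D).card =
            telephone (n - 2) := by
        intro y hy
        obtain ⟨hyx, hys⟩ := Finset.mem_erase.mp hy
        have hsub : ({x, y} : Finset ℕ) ⊆ s := by
          intro a ha
          rcases Finset.mem_insert.mp ha with rfl | ha
          · exact hx
          · rw [Finset.mem_singleton] at ha; subst ha; exact hys
        rw [card_filter_edge s {x, y} (pair_card_two hyx) hsub]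
        apply ih (n - 2) (by omega)
        rw [Finset.card_sdiff_of_subset hsub, pair_card_two hyx, hs]
      rw [hsplit, h1, h2, Finset.card_biUnion hdisjU,
        Finset.sum_congr rfl hterm, Finset.sum_const, smul_eq_mul,
        ih (n - 1) (by omega) _ (by rw [Finset.card_erase_of_mem hx, hs]),
        Finset.card_erase_of_mem hx, hs]
      rcases n with _ | _ | k
      · omega
      · simp [telephone]
      · show (k + 1) * telephone k + telephone (k + 1) = telephone (k + 2)
        rw [telephone]
        exact Nat.add_comm _ _

/-- The sum over all partial matchings `D` of `{1,…,L}` of the crossing number at bond `m`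
equals `m * (L - m) * T (L - 2)`; equivalently, the average crossing number at bond `m`
over the uniform distribution on partial matchings equals `m * (L - m) * T (L - 2) / T L`. -/
theorem sum_crossing_eq_mul_telephone (L m : ℕ) (hL : 2 ≤ L) (hm : 0 < m) (hmL : m < L) :
    (∑ D ∈ matchings L, crossing m D) = m * (L - m) * telephone (L - 2) ∧
    (∑ D ∈ matchings L, (crossing m D : ℚ)) / ((matchings L).card : ℚ) =
      (↑(m * (L - m) * telephone (L - 2)) : ℚ) / (telephone L : ℚ) := by
  classical
  have hIcc : (Finset.Icc 1 L).card = L := by rw [Nat.card_Icc]; omega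
  set E : Finset (Finset ℕ) :=
    (Finset.Icc 1 m ×ˢ Finset.Icc (m + 1) L).image (fun p => ({p.1, p.2} : Finset ℕ)) with hE
  have hmemE : ∀ e : Finset ℕ, e ∈ E ↔
      ∃ a b, (1 ≤ a ∧ a ≤ m) ∧ (m + 1 ≤ b ∧ b ≤ L) ∧ e = {a, b} := by
    intro e
    simp only [hE, Finset.mem_image, Finset.mem_product, Finset.mem_Icc, Prod.exists]
    constructor
    · rintro ⟨a, b, ⟨h1, h2⟩, rfl⟩
      exact ⟨a, b, h1, h2, rfl⟩
    · rintro ⟨a, b, h1, h2, rfl⟩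
      exact ⟨a, b, ⟨h1, h2⟩, rfl⟩
  have hcardE : E.card = m * (L - m) := by
    rw [hE, Finset.card_image_of_injOn, Finset.card_product, Nat.card_Icc, Nat.card_Icc]
    · congr 1 <;> omega
    · rintro ⟨a, b⟩ hab ⟨c, d⟩ hcd h
      simp only [Finset.mem_coe, Finset.mem_product, Finset.mem_Icc] at hab hcd
      simp only at h
      have ha : a ∈ ({c, d} : Finset ℕ) := h ▸ Finset.mem_insert_self a {b}
      have hb : b ∈ ({c, d} : Finset ℕ) := h ▸ (by simp : b ∈ ({a, b} : Finset ℕ))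
      simp only [Finset.mem_insert, Finset.mem_singleton] at ha hb
      have : a = c ∧ b = d := by rcases ha with rfl | rfl <;> rcases hb with h' | h' <;> omega
      exact Prod.ext this.1 this.2
  have hEprop : ∀ e ∈ E, e.card = 2 ∧ e ⊆ Finset.Icc 1 L := by
    intro e he
    obtain ⟨a, b, h1, h2, rfl⟩ := (hmemE e).mp he
    constructor
    · rw [Finset.card_insert_of_notMem (by simp; omega), Finset.card_singleton]
    · intro t ht
      rcases Finset.mem_insert.mp ht with rfl | ht
      · rw [Finset.mem_Icc]; omega
      · rw [Finset.mem_singleton] at ht; subst ht; rw [Finset.mem_Icc]; omega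
  have hfilter : ∀ D ∈ matchings L, crossing m D = (E.filter (fun e => e ∈ D)).card := by
    intro D hD
    rw [matchings_eq] at hD
    obtain ⟨hsub, hcard, _⟩ := mem_matchingsOf.mp hD
    unfold crossing
    rw [show D.filter (fun e => ∃ a ∈ e, ∃ b ∈ e, a ≤ m ∧ m < b)
        = D.filter (fun e => e ∈ E) from Finset.filter_congr ?_,
      Finset.filter_mem_eq_inter, Finset.inter_comm, ← Finset.filter_mem_eq_inter]
    intro e he
    constructor
    · rintro ⟨a, ha, b, hb, ham, hmb⟩
      have hab : a ≠ b := by omega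
      have hpsub : ({a, b} : Finset ℕ) ⊆ e := by
        intro t ht
        rcases Finset.mem_insert.mp ht with rfl | ht
        · exact ha
        · rw [Finset.mem_singleton] at ht; subst ht; exact hb
      have hp2 : ({a, b} : Finset ℕ).card = 2 := by
        rw [Finset.card_insert_of_notMem (by simp [hab]), Finset.card_singleton]
      have heq : e = {a, b} :=
        (Finset.eq_of_subset_of_card_le hpsub (by rw [hcard e he, hp2])).symm
      rw [hmemE]
      have h1a : 1 ≤ a := (Finset.mem_Icc.mp (hsub e he ha)).1
      have hbL : b ≤ L := (Finset.mem_Icc.mp (hsub e he hb)).2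
      exact ⟨a, b, ⟨h1a, ham⟩, ⟨by omega, hbL⟩, heq⟩
    · intro heE
      obtain ⟨a, b, h1, h2, rfl⟩ := (hmemE e).mp heE
      exact ⟨a, by simp, b, by simp, by omega, by omega⟩
  have key : (∑ D ∈ matchings L, crossing m D) = m * (L - m) * telephone (L - 2) := by
    rw [Finset.sum_congr rfl hfilter]
    have : ∀ D ∈ matchings L, (E.filter (fun e => e ∈ D)).card
        = ∑ e ∈ E, if e ∈ D then 1 else 0 := by
      intro D _; rw [Finset.card_filter]
    rw [Finset.sum_congr rfl this, Finset.sum_comm]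
    have hterm : ∀ e ∈ E, (∑ D ∈ matchings L, if e ∈ D then 1 else 0)
        = telephone (L - 2) := by
      intro e he
      obtain ⟨he2, hesub⟩ := hEprop e he
      rw [← Finset.card_filter, matchings_eq, card_filter_edge _ e he2 hesub,
        card_matchingsOf (L - 2) _ (by rw [Finset.card_sdiff_of_subset hesub, he2, hIcc])]
    rw [Finset.sum_congr rfl hterm, Finset.sum_const, smul_eq_mul, hcardE]
  have hcardM : (matchings L).card = telephone L := by
    rw [matchings_eq, card_matchingsOf L _ hIcc]
  refine ⟨key, ?_⟩
  rw [hcardM, ← Nat.cast_sum, key]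
end

section
/- For every real number α with 0 ≤ α ≤ 1, the sequence a_L = ⌊αL⌋·(L−⌊αL⌋)·T(L−2)/(L·T(L)), defined for integers L ≥ 2, converges to α·(1−α) as L → ∞. (That is, the rescaled average Rényi-0 entanglement profile (1/L)·S̄_{αL}(L) = (1/L)·⌊αL⌋(L−⌊αL⌋)T(L−2)/T(L) of the critical stationary distribution converges to α(1−α) in the thermodynamic limit.) -/
open Filter Topology

lemma telephone_pos : ∀ n, 0 < telephone n
  | 0 => one_pos
  | 1 => one_pos
  | n + 2 => by
    have := telephone_pos n
    have := telephone_pos (n + 1)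
    simp only [telephone]
    positivity

lemma telephone_add_two_cast (n : ℕ) :
    (telephone (n + 2) : ℝ) = telephone (n + 1) + (n + 1) * telephone n := by
  simp only [telephone]
  push_cast
  ring

lemma telephone_succ_bounds (n : ℕ) :
    √(n + 1) * telephone n ≤ (telephone (n + 1) : ℝ) ∧
      (telephone (n + 1) : ℝ) ≤ (√(n + 1) + 1) * telephone n := by
  induction n with
  | zero => simp [telephone]
  | succ n ih =>
    obtain ⟨hlo, hhi⟩ := ih
    push_cast
    rw [add_assoc, one_add_one_eq_two, telephone_add_two_cast]
    set x := √((n : ℝ) + 1)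
    set y := √((n : ℝ) + 2)
    have hx : x ^ 2 = n + 1 := Real.sq_sqrt (by positivity)
    have hy : y ^ 2 = n + 2 := Real.sq_sqrt (by positivity)
    have hx1 : 1 ≤ x := Real.one_le_sqrt.mpr (by linarith [n.cast_nonneg (α := ℝ)])
    have hxy : x ≤ y := Real.sqrt_le_sqrt (by linarith)
    have hT : (0 : ℝ) < telephone n := by exact_mod_cast telephone_pos n
    constructor
    · -- `y (x + 1) ≤ x + y²` because `(y - 1) (y - x) ≥ 0`
      have hcross : y * (x + 1) ≤ x + (n + 2) := by nlinarith
      nlinarith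
    · nlinarith

lemma telephone_add_two_div_le (n : ℕ) :
    (telephone (n + 2) : ℝ) / ((n + 2) * telephone n) ≤ 1 + (√(n + 1))⁻¹ := by
  have hT : (0 : ℝ) < telephone n := by exact_mod_cast telephone_pos n
  have hx : 0 < √((n : ℝ) + 1) := Real.sqrt_pos.mpr (by positivity)
  have hx2 : √((n : ℝ) + 1) ^ 2 = n + 1 := Real.sq_sqrt (by positivity)
  rw [div_le_iff₀ (by positivity), telephone_add_two_cast]
  have hupper := (telephone_succ_bounds n).2
  have hsqrt_le : √((n : ℝ) + 1) ≤ (√(n + 1))⁻¹ * (n + 2) := by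
    rw [inv_mul_eq_div, le_div_iff₀ hx]
    nlinarith
  nlinarith

lemma one_le_telephone_add_two_div (n : ℕ) :
    1 ≤ (telephone (n + 2) : ℝ) / ((n + 2) * telephone n) := by
  have hT : (0 : ℝ) < telephone n := by exact_mod_cast telephone_pos n
  rw [le_div_iff₀ (by positivity), telephone_add_two_cast]
  have hlower := (telephone_succ_bounds n).1
  have hsqrt_ge : 1 ≤ √((n : ℝ) + 1) := Real.one_le_sqrt.mpr (by linarith [n.cast_nonneg (α := ℝ)])
  nlinarith

lemma tendsto_telephone_add_two_div :
    Tendsto (fun n : ℕ => (telephone (n + 2) : ℝ) / ((n + 2) * telephone n)) atTop (𝓝 1) := by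
  have hsqrt : Tendsto (fun n : ℕ => √((n : ℝ) + 1)) atTop atTop :=
    Real.tendsto_sqrt_atTop.comp (tendsto_atTop_add_const_right _ 1 tendsto_natCast_atTop_atTop)
  have hupper : Tendsto (fun n : ℕ => 1 + (√((n : ℝ) + 1))⁻¹) atTop (𝓝 1) := by
    simpa using (tendsto_inv_atTop_zero.comp hsqrt).const_add 1
  exact tendsto_of_tendsto_of_tendsto_of_le_of_le tendsto_const_nhds hupper
    one_le_telephone_add_two_div telephone_add_two_div_le

lemma tendsto_mul_telephone_sub_two_div :
    Tendsto (fun L : ℕ => (L : ℝ) * telephone (L - 2) / telephone L) atTop (𝓝 1) := by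
  rw [← tendsto_add_atTop_iff_nat 2]
  simpa using tendsto_telephone_add_two_div.inv₀ one_ne_zero

theorem tendsto_rescaled_profile_general (α : ℝ) (h0 : 0 ≤ α) :
    Filter.Tendsto
      (fun L : ℕ =>
        ((⌊α * L⌋₊ : ℝ) * ((L : ℝ) - (⌊α * L⌋₊ : ℝ)) * (telephone (L - 2) : ℝ)) /
          ((L : ℝ) * (telephone L : ℝ)))
      Filter.atTop (nhds (α * (1 - α))) := by
  have hfloor : Tendsto (fun L : ℕ => (⌊α * L⌋₊ : ℝ) / L) atTop (𝓝 α) :=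
    (tendsto_nat_floor_mul_div_atTop h0).comp tendsto_natCast_atTop_atTop
  have hlimit := (hfloor.mul (hfloor.const_sub 1)).mul tendsto_mul_telephone_sub_two_div
  rw [mul_one] at hlimit
  refine hlimit.congr' ?_
  filter_upwards [eventually_ge_atTop 1] with L hL
  have hL : (L : ℝ) ≠ 0 := by exact_mod_cast (show L ≠ 0 by omega)
  have hT : (telephone L : ℝ) ≠ 0 := by exact_mod_cast (telephone_pos L).ne'
  field_simp

/-- For `0 ≤ α ≤ 1`, the rescaled average Rényi-0 entanglement profile
`⌊αL⌋ (L - ⌊αL⌋) T(L-2) / (L T(L))` converges to `α (1 - α)` as `L → ∞`. -/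
theorem tendsto_rescaled_profile (α : ℝ) (h0 : 0 ≤ α) (h1 : α ≤ 1) :
    Filter.Tendsto
      (fun L : ℕ =>
        ((⌊α * L⌋₊ : ℝ) * ((L : ℝ) - (⌊α * L⌋₊ : ℝ)) * (telephone (L - 2) : ℝ)) /
          ((L : ℝ) * (telephone L : ℝ)))
      Filter.atTop (nhds (α * (1 - α))) :=
  tendsto_rescaled_profile_general α h0
end

section
/- Let m, L be integers with 1 ≤ m and 2m ≤ L. Then Σ_{k=0}^{m} (L−m−k)·C(m,k)·C(L−m,k)·k!·T(m−k)·T(L−m−k) = (L−m)·( T(L−1) + (L−1−m)·T(L−2) ), where C denotes the binomial coefficient. -/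
lemma tel_succ (j : ℕ) : telephone (j + 1) = telephone j + j * telephone (j - 1) := by
  cases j with
  | zero => simp [telephone]
  | succ i => simp [telephone]

lemma choose_absorb (n k : ℕ) : (n - k) * n.choose k = n * (n - 1).choose k := by
  cases n with
  | zero => simp
  | succ j =>
    simp only [Nat.succ_sub_one]
    calc (j + 1 - k) * (j + 1).choose k
        = (j + 1).choose k * (j + 1 - k) := mul_comm _ _
      _ = (j + 1).choose (k + 1) * (k + 1) := (Nat.choose_succ_right_eq _ _).symm
      _ = (j + 1) * j.choose k := (Nat.add_one_mul_choose_eq j k).symm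

def S (m n : ℕ) : ℕ :=
  ∑ k ∈ Finset.range (m + 1),
    m.choose k * n.choose k * k.factorial * telephone (m - k) * telephone (n - k)

lemma S_eq : ∀ m n, S m n = telephone (m + n) := by
  intro m
  induction m using Nat.strong_induction_on with
  | _ m ih =>
  rcases m with _ | _ | m
  · intro n
    simp [S, telephone]
  · intro n
    have : S 1 n = telephone n + n * telephone (n - 1) := by
      simp [S, Finset.sum_range_succ, telephone, Nat.choose_one_right, mul_comm]
    rw [this, ← tel_succ]
    ring_nf
  · intro n
    -- Step 1 : Pascal split
    have h1 : S (m + 2) n =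
        (∑ k ∈ Finset.range (m + 3),
          (m+1).choose k * n.choose k * k.factorial * telephone (m+2-k) * telephone (n-k)) +
        (∑ i ∈ Finset.range (m + 2),
          (m+1).choose i * n.choose (i+1) * (i+1).factorial * telephone (m+1-i) * telephone (n-(i+1))) := by
      rw [S, Finset.sum_range_succ'
        (fun k => (m+2).choose k * n.choose k * k.factorial * telephone (m+2-k) * telephone (n-k)) (m+2)]
      rw [Finset.sum_range_succ'
        (fun k => (m+1).choose k * n.choose k * k.factorial * telephone (m+2-k) * telephone (n-k)) (m+2)]
      rw [add_right_comm, ← Finset.sum_add_distrib]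
      congr 1
      · apply Finset.sum_congr rfl
        intro i _
        have hp : (m+2).choose (i+1) = (m+1).choose i + (m+1).choose (i+1) :=
          Nat.choose_succ_succ (m+1) i
        have hmi : m + 2 - (i+1) = m + 1 - i := by omega
        rw [hp, hmi]
        ring
    -- Step 2 : expand telephone (m+2-k)
    have h2 : (∑ k ∈ Finset.range (m + 3),
          (m+1).choose k * n.choose k * k.factorial * telephone (m+2-k) * telephone (n-k)) =
        S (m+1) n + (m+1) * S m n := by
      have hptw : ∀ k ∈ Finset.range (m + 3),
          (m+1).choose k * n.choose k * k.factorial * telephone (m+2-k) * telephone (n-k) =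
          (m+1).choose k * n.choose k * k.factorial * telephone (m+1-k) * telephone (n-k)
          + ((m+1-k) * (m+1).choose k) * n.choose k * k.factorial * telephone (m-k) * telephone (n-k) := by
        intro k hk
        rcases Nat.lt_or_ge k (m+2) with h | h
        · have e1 : m + 2 - k = (m + 1 - k) + 1 := by omega
          have e2 : m + 1 - k - 1 = m - k := by omega
          rw [e1, tel_succ, e2]
          ring
        · have hk2 : k = m + 2 := by
            simp [Finset.mem_range] at hk; omega
          subst hk2
          have : (m+1).choose (m+2) = 0 := Nat.choose_eq_zero_of_lt (by omega)
          simp [this]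
      rw [Finset.sum_congr rfl hptw, Finset.sum_add_distrib]
      congr 1
      · rw [S, Finset.sum_range_succ
          (fun k => (m+1).choose k * n.choose k * k.factorial * telephone (m+1-k) * telephone (n-k)) (m+2)]
        have : (m+1).choose (m+2) = 0 := Nat.choose_eq_zero_of_lt (by omega)
        simp [this]
      · have : ∀ k ∈ Finset.range (m + 3),
            ((m+1-k) * (m+1).choose k) * n.choose k * k.factorial * telephone (m-k) * telephone (n-k)
            = (m+1) * (m.choose k * n.choose k * k.factorial * telephone (m-k) * telephone (n-k)) := by
          intro k _
          have := choose_absorb (m+1) k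
          simp only [Nat.add_sub_cancel] at this
          rw [this]; ring
        rw [Finset.sum_congr rfl this, ← Finset.mul_sum, S]
        congr 1
        rw [Finset.sum_range_succ _ (m+2), Finset.sum_range_succ _ (m+1)]
        have e1 : m.choose (m+1) = 0 := Nat.choose_eq_zero_of_lt (by omega)
        have e2 : m.choose (m+2) = 0 := Nat.choose_eq_zero_of_lt (by omega)
        simp [e1, e2]
    -- Step 3 : absorb into n * S (m+1) (n-1)
    have h3 : (∑ i ∈ Finset.range (m + 2),
          (m+1).choose i * n.choose (i+1) * (i+1).factorial * telephone (m+1-i) * telephone (n-(i+1))) =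
        n * S (m+1) (n-1) := by
      have hptw : ∀ i ∈ Finset.range (m + 2),
          (m+1).choose i * n.choose (i+1) * (i+1).factorial * telephone (m+1-i) * telephone (n-(i+1)) =
          n * ((m+1).choose i * (n-1).choose i * i.factorial * telephone (m+1-i) * telephone (n-1-i)) := by
        intro i _
        have e1 : n - (i+1) = n - 1 - i := by omega
        have e2 : n.choose (i+1) * (i+1).factorial = (n - i) * n.choose i * i.factorial := by
          rw [Nat.factorial_succ, ← mul_assoc, mul_comm ((n-i)) (n.choose i),
            ← Nat.choose_succ_right_eq]
        rw [e1]
        calc (m+1).choose i * n.choose (i+1) * (i+1).factorial * telephone (m+1-i) * telephone (n-1-i)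
            = (m+1).choose i * (n.choose (i+1) * (i+1).factorial) * telephone (m+1-i) * telephone (n-1-i) := by ring
          _ = (m+1).choose i * ((n-i) * n.choose i * i.factorial) * telephone (m+1-i) * telephone (n-1-i) := by rw [e2]
          _ = ((n-i) * n.choose i) * ((m+1).choose i * i.factorial * telephone (m+1-i) * telephone (n-1-i)) := by ring
          _ = (n * (n-1).choose i) * ((m+1).choose i * i.factorial * telephone (m+1-i) * telephone (n-1-i)) := by rw [choose_absorb]
          _ = n * ((m+1).choose i * (n-1).choose i * i.factorial * telephone (m+1-i) * telephone (n-1-i)) := by ring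
      rw [Finset.sum_congr rfl hptw, ← Finset.mul_sum, S]
    rw [h1, h2, h3, ih (m+1) (by omega) n, ih m (by omega) n, ih (m+1) (by omega) (n-1)]
    rcases n with _ | j
    · have h := tel_succ (m + 1)
      simp only [Nat.add_sub_cancel] at h
      simp only [Nat.add_zero, Nat.zero_mul]
      exact h.symm
    · have e : j + 1 - 1 = j := rfl
      rw [e]
      have e2 : m + 2 + (j + 1) = (m + j + 1) + 2 := by omega
      have e3 : m + 1 + (j + 1) = (m + j + 1) + 1 := by omega
      have e4 : m + (j + 1) = m + j + 1 := by omega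
      have e5 : m + 1 + j = m + j + 1 := by omega
      rw [e2, e3, e4, e5]
      have d1 : telephone ((m+j+1)+2) = telephone ((m+j+1)+1) + ((m+j+1)+1) * telephone (m+j+1) := by
        simp [telephone]
      have d2 : telephone ((m+j+1)+1) = telephone (m+j+1) + (m+j+1) * telephone (m+j) := by
        have h := tel_succ (m+j+1)
        simpa using h
      rw [d1, d2]
      ring
/-- For `1 ≤ m` and `2m ≤ L`,
`Σ_{k=0}^{m} (L-m-k) C(m,k) C(L-m,k) k! T(m-k) T(L-m-k)
  = (L-m) (T(L-1) + (L-1-m) T(L-2))`. -/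
theorem sum_weighted_crossing_counts (m L : ℕ) (hm : 1 ≤ m) (hL : 2 * m ≤ L) :
    (∑ k ∈ Finset.range (m + 1),
        (L - m - k) * (m.choose k * (L - m).choose k * k.factorial *
          telephone (m - k) * telephone (L - m - k))) =
      (L - m) * (telephone (L - 1) + (L - 1 - m) * telephone (L - 2)) := by
  set n := L - m with hn
  have hptw : ∀ k ∈ Finset.range (m+1),
      (n - k) * (m.choose k * n.choose k * k.factorial * telephone (m-k) * telephone (n-k)) =
      n * (m.choose k * (n-1).choose k * k.factorial * telephone (m-k) * telephone (n-1-k))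
      + n * ((n-1) * (m.choose k * (n-2).choose k * k.factorial * telephone (m-k) * telephone (n-2-k))) := by
    intro k hk
    rcases Nat.lt_or_ge k n with hkn | hkn
    · have ht : telephone (n-k) = telephone (n-1-k) + (n-1-k) * telephone (n-2-k) := by
        have e1 : n - k = (n-1-k) + 1 := by omega
        have e2 : n - 1 - k - 1 = n - 2 - k := by omega
        rw [e1, tel_succ, e2]
      have ca2 : (n-1-k) * (n-1).choose k = (n-1) * (n-2).choose k := by
        have h := choose_absorb (n-1) k
        have e : n - 1 - 1 = n - 2 := by omega
        rwa [e] at h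
      calc (n - k) * (m.choose k * n.choose k * k.factorial * telephone (m-k) * telephone (n-k))
          = ((n-k) * n.choose k) * (m.choose k * k.factorial * telephone (m-k) * telephone (n-k)) := by ring
        _ = (n * (n-1).choose k) * (m.choose k * k.factorial * telephone (m-k) * telephone (n-k)) := by rw [choose_absorb]
        _ = (n * (n-1).choose k) * (m.choose k * k.factorial * telephone (m-k) * (telephone (n-1-k) + (n-1-k) * telephone (n-2-k))) := by rw [ht]
        _ = n * (m.choose k * (n-1).choose k * k.factorial * telephone (m-k) * telephone (n-1-k))
            + ((n-1-k) * (n-1).choose k) * (n * (m.choose k * k.factorial * telephone (m-k) * telephone (n-2-k))) := by ring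
        _ = n * (m.choose k * (n-1).choose k * k.factorial * telephone (m-k) * telephone (n-1-k))
            + ((n-1) * (n-2).choose k) * (n * (m.choose k * k.factorial * telephone (m-k) * telephone (n-2-k))) := by rw [ca2]
        _ = _ := by ring
    · have hz : n - k = 0 := by omega
      have c1 : (n-1).choose k = 0 := Nat.choose_eq_zero_of_lt (by omega)
      have c2 : (n-2).choose k = 0 := Nat.choose_eq_zero_of_lt (by omega)
      simp [hz, c1, c2]
  rw [Finset.sum_congr rfl hptw, Finset.sum_add_distrib, ← Finset.mul_sum, ← Finset.mul_sum]
  have hS1 : (∑ k ∈ Finset.range (m+1),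
      m.choose k * (n-1).choose k * k.factorial * telephone (m-k) * telephone (n-1-k)) = telephone (m + (n-1)) := S_eq m (n-1)
  have hS2 : (∑ k ∈ Finset.range (m+1),
      (n-1) * (m.choose k * (n-2).choose k * k.factorial * telephone (m-k) * telephone (n-2-k))) = (n-1) * telephone (m + (n-2)) := by
    rw [← Finset.mul_sum]
    exact congrArg (fun x => (n-1) * x) (S_eq m (n-2))
  rw [hS1, hS2]
  have g1 : m + (n - 1) = L - 1 := by omega
  rcases Nat.lt_or_ge n 2 with h2 | h2
  · have z1 : n - 1 = 0 := by omega
    have z2 : L - 1 - m = 0 := by omega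
    rw [g1, z1, z2]
    ring
  · have g2 : m + (n - 2) = L - 2 := by omega
    have g3 : n - 1 = L - 1 - m := by omega
    rw [g1, g2, g3]
    ring
end

section
/- For all integers 0 ≤ m ≤ L, Σ_{k=0}^{min(m,L−m)} C(m,k)·C(L−m,k)·k!·T(m−k)·T(L−m−k) = T(L), where C denotes the binomial coefficient. -/
namespace TelephoneAux

lemma telephone_succ (n : ℕ) :
    telephone (n + 1) = telephone n + n * telephone (n - 1) := by
  match n with
  | 0 => simp [telephone]
  | m + 1 => simp [telephone]

lemma telephone_eq (m : ℕ) :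
    telephone m = telephone (m - 1) + (m - 1) * telephone (m - 2) := by
  match m with
  | 0 => simp [telephone]
  | 1 => simp [telephone]
  | n + 2 => simp [telephone]

lemma mul_sub_one_choose (n j : ℕ) :
    n * (n - 1).choose j = n.choose (j + 1) * (j + 1) := by
  match n with
  | 0 => simp
  | m + 1 => simpa using Nat.add_one_mul_choose_eq m j

lemma key (A1 A0 B1 B2 D x y1 y2 a b c k1 kf : ℕ)
    (h3 : k1 * A1 = a * A0) (h4 : c * B2 = b * D) :
    A1 * (B1 + B2) * (k1 * kf) * x * (y1 + c * y2)
      = A1 * B2 * (k1 * kf) * x * y1 + b * (A1 * D * (k1 * kf) * x * y2)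
        + a * (A0 * B1 * kf * x * (y1 + c * y2)) := by
  zify at h3 h4 ⊢
  linear_combination (B1 * kf * x * (y1 + c * y2)) * h3 + (A1 * k1 * kf * x * y2) * h4

/-- the `k`-th term of the crossing sum. -/
def tm (a b k : ℕ) : ℕ :=
  a.choose k * b.choose k * k.factorial * telephone (a - k) * telephone (b - k)

/-- the total crossing sum `F(a, b)`. -/
def S (a b : ℕ) : ℕ := ∑ k ∈ Finset.range (b + 1), tm a b k

lemma tm_eq_zero {a b k : ℕ} (h : b < k) : tm a b k = 0 := by
  simp [tm, Nat.choose_eq_zero_of_lt h]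

lemma S_eq_sum (a b N : ℕ) (h : b + 1 ≤ N) :
    S a b = ∑ k ∈ Finset.range N, tm a b k := by
  apply Finset.sum_subset (Finset.range_subset_range.2 h)
  intro k _ hk
  simp only [Finset.mem_range, not_lt] at hk
  exact tm_eq_zero (by omega)

lemma tm_rec (a b k : ℕ) :
    tm a (b + 1) (k + 1)
      = tm a b (k + 1) + b * tm a (b - 1) (k + 1) + a * tm (a - 1) b k := by
  have e1 : b + 1 - (k + 1) = b - k := by omega
  have e2 : a - 1 - k = a - (k + 1) := by omega
  have e3 : b - 1 - (k + 1) = b - (k + 2) := by omega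
  have h2 : telephone (b - k)
      = telephone (b - (k + 1)) + (b - (k + 1)) * telephone (b - (k + 2)) := by
    have h := telephone_eq (b - k)
    rw [show b - k - 1 = b - (k + 1) from by omega,
        show b - k - 2 = b - (k + 2) from by omega] at h
    exact h
  have h3 : (k + 1) * a.choose (k + 1) = a * (a - 1).choose k := by
    rw [mul_sub_one_choose a k, mul_comm]
  have h4 : (b - (k + 1)) * b.choose (k + 1) = b * (b - 1).choose (k + 1) := by
    rw [mul_sub_one_choose b (k + 1)]
    rw [Nat.choose_succ_right_eq b (k + 1), mul_comm]
  simp only [tm, e1, e2, e3, Nat.choose_succ_succ, Nat.factorial_succ]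
  rw [h2]
  exact key (a.choose (k + 1)) ((a - 1).choose k) (b.choose k) (b.choose (k + 1))
    ((b - 1).choose (k + 1)) (telephone (a - (k + 1))) (telephone (b - (k + 1)))
    (telephone (b - (k + 2))) a b (b - (k + 1)) (k + 1) k.factorial h3 h4

lemma tm_zero_rec (a b : ℕ) :
    tm a (b + 1) 0 = tm a b 0 + b * tm a (b - 1) 0 := by
  simp only [tm, Nat.choose_zero_right, Nat.factorial_zero, Nat.sub_zero, one_mul,
    mul_one]
  rw [telephone_succ b]
  ring

lemma S_rec (a b : ℕ) :
    S a (b + 1) = S a b + b * S a (b - 1) + a * S (a - 1) b := by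
  have hb : S a b = ∑ k ∈ Finset.range (b + 2), tm a b k := S_eq_sum a b (b + 2) (by omega)
  have hb1 : S a (b - 1) = ∑ k ∈ Finset.range (b + 2), tm a (b - 1) k :=
    S_eq_sum a (b - 1) (b + 2) (by omega)
  rw [S, hb, hb1, show S (a - 1) b = ∑ k ∈ Finset.range (b + 1), tm (a - 1) b k from rfl]
  rw [Finset.sum_range_succ' (tm a (b + 1)) (b + 1),
      Finset.sum_range_succ' (tm a b) (b + 1),
      Finset.sum_range_succ' (tm a (b - 1)) (b + 1)]
  simp only [tm_rec, tm_zero_rec]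
  rw [Finset.sum_add_distrib, Finset.sum_add_distrib, ← Finset.mul_sum, ← Finset.mul_sum]
  ring

lemma S_zero (a : ℕ) : S a 0 = telephone a := by
  simp [S, tm, show telephone 0 = 1 from rfl]

lemma S_eq_telephone : ∀ n a b, a + b = n → S a b = telephone n := by
  intro n
  induction n using Nat.strong_induction_on with
  | _ n ih =>
    intro a b h
    match b with
    | 0 =>
      rw [S_zero, show a = n from by omega]
    | c + 1 =>
      rw [S_rec]
      have h1 : S a c = telephone (a + c) := ih (a + c) (by omega) a c rfl
      have h2 : c * S a (c - 1) = c * telephone (a + c - 1) := by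
        match c with
        | 0 => simp
        | d + 1 =>
          rw [show a + (d + 1) - 1 = a + d from by omega,
              show d + 1 - 1 = d from rfl, ih (a + d) (by omega) a d rfl]
      have h3 : a * S (a - 1) c = a * telephone (a + c - 1) := by
        match a with
        | 0 => simp
        | e + 1 =>
          rw [show e + 1 + c - 1 = e + c from by omega,
              show e + 1 - 1 = e from rfl, ih (e + c) (by omega) e c rfl]
      rw [h1, h2, h3, show n = (a + c) + 1 from by omega, telephone_succ (a + c)]
      ring

end TelephoneAux

/-- For `0 ≤ m ≤ L`,
`Σ_{k=0}^{min(m, L-m)} C(m,k) C(L-m,k) k! T(m-k) T(L-m-k) = T(L)`. -/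
theorem sum_crossing_counts_eq_telephone (L m : ℕ) (hm : m ≤ L) :
    (∑ k ∈ Finset.range (min m (L - m) + 1),
        m.choose k * (L - m).choose k * k.factorial *
          telephone (m - k) * telephone (L - m - k)) =
      telephone L := by
  have h1 : (∑ k ∈ Finset.range (min m (L - m) + 1),
        m.choose k * (L - m).choose k * k.factorial *
          telephone (m - k) * telephone (L - m - k)) = TelephoneAux.S m (L - m) := by
    rw [TelephoneAux.S]
    simp only [TelephoneAux.tm]
    apply Finset.sum_subset
    · exact Finset.range_subset_range.2 (by omega)
    · intro k hk hk'
      simp only [Finset.mem_range, not_lt] at hk hk'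
      have hmk : m < k := by omega
      simp [Nat.choose_eq_zero_of_lt hmk]
  rw [h1, TelephoneAux.S_eq_telephone L m (L - m) (by omega)]
end

section
/- Let R(L) denote the number of RSF layouts on L qubits. Then R(0) = R(1) = 1, and for every integer L ≥ 1, R(L+1) = R(L) + L·R(L−1). -/
/-- An RSF (right standard form) layout on `L` qubits: a finite sequence
`((k_1,l_1),…,(k_n,l_n))` (possibly empty) of pairs of positive integers with
`k_i + 2 ≤ k_{i+1}` for consecutive entries and `1 ≤ l_i ≤ L - k_i` for each entry. -/
def IsRSF (L : ℕ) (s : List (ℕ × ℕ)) : Prop :=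
  (∀ p ∈ s, 1 ≤ p.1 ∧ 1 ≤ p.2 ∧ p.2 ≤ L - p.1) ∧
    s.Chain' fun p q => p.1 + 2 ≤ q.1

/-- The number of RSF layouts on `L` qubits. -/
noncomputable def numRSF (L : ℕ) : ℕ :=
  Nat.card {s : List (ℕ × ℕ) // IsRSF L s}

/-!
A layout on `L + 2` qubits either starts with a pair `(1, l)`, `1 ≤ l ≤ L + 1`, and then the
rest, shifted down by `2`, is a layout on `L` qubits; or all its positions are at least `2`,
and shifting it down by `1` gives a layout on `L + 1` qubits. Both shifts are invertible, so the
layouts on `L + 2` qubits are in bijection with the disjoint union of the layouts on `L + 1`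
qubits and `L + 1` copies of the layouts on `L` qubits. On at most one qubit, the only layout is
the empty one.
-/

namespace RSF

abbrev Layout (L : ℕ) : Type := {s : List (ℕ × ℕ) // IsRSF L s}

local instance : IsTrans (ℕ × ℕ) (fun p q => p.1 + 2 ≤ q.1) :=
  ⟨fun _ _ _ h₁ h₂ => by omega⟩

theorem isRSF_iff_pairwise {L : ℕ} {s : List (ℕ × ℕ)} :
    IsRSF L s ↔ (∀ p ∈ s, 1 ≤ p.1 ∧ 1 ≤ p.2 ∧ p.2 ≤ L - p.1) ∧
      s.Pairwise fun p q => p.1 + 2 ≤ q.1 := by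
  rw [IsRSF, List.Chain', List.isChain_iff_pairwise]

theorem isRSF_nil (L : ℕ) : IsRSF L [] := by
  simp [isRSF_iff_pairwise]

theorem isRSF_cons_iff {L k l : ℕ} {t : List (ℕ × ℕ)} :
    IsRSF L ((k, l) :: t) ↔
      (1 ≤ k ∧ 1 ≤ l ∧ l ≤ L - k) ∧ (∀ p ∈ t, k + 2 ≤ p.1) ∧ IsRSF L t := by
  simp only [isRSF_iff_pairwise, List.forall_mem_cons, List.pairwise_cons]
  tauto

theorem eq_nil_of_isRSF {L : ℕ} (hL : L ≤ 1) {s : List (ℕ × ℕ)} (h : IsRSF L s) : s = [] := by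
  rcases s with _ | ⟨p, t⟩
  · rfl
  · have := h.1 p List.mem_cons_self
    omega

theorem numRSF_of_le_one {L : ℕ} (hL : L ≤ 1) : numRSF L = 1 :=
  Nat.card_eq_one_iff_unique.2
    ⟨⟨fun s t => Subtype.ext <| by rw [eq_nil_of_isRSF hL s.2, eq_nil_of_isRSF hL t.2]⟩,
      ⟨⟨[], isRSF_nil L⟩⟩⟩

def shift (d : ℕ) : List (ℕ × ℕ) → List (ℕ × ℕ) :=
  List.map (Prod.map (· + d) id)

theorem shift_injective (d : ℕ) : Function.Injective (shift d) :=
  List.map_injective_iff.2 <| Prod.map_injective.2 ⟨add_left_injective d, fun _ _ => id⟩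

theorem add_one_le_of_mem_shift {L d : ℕ} {t : List (ℕ × ℕ)} (ht : IsRSF L t) :
    ∀ p ∈ shift d t, d + 1 ≤ p.1 := by
  simp only [shift, List.mem_map]
  rintro _ ⟨q, hq, rfl⟩
  have := (ht.1 q hq).1
  simp only [Prod.map_fst]
  omega

theorem isRSF_shift {L d : ℕ} {t : List (ℕ × ℕ)} (ht : IsRSF L t) :
    IsRSF (L + d) (shift d t) := by
  rw [isRSF_iff_pairwise] at ht ⊢
  refine ⟨?_, List.pairwise_map.2 <| ht.2.imp fun h => by simp only [Prod.map_fst]; omega⟩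
  simp only [shift, List.mem_map]
  rintro _ ⟨q, hq, rfl⟩
  have := ht.1 q hq
  simp only [Prod.map_fst, Prod.map_snd, id]
  omega

theorem exists_shift_eq_of_isRSF {L d : ℕ} {s : List (ℕ × ℕ)} (hs : IsRSF (L + d) s)
    (hd : ∀ p ∈ s, d + 1 ≤ p.1) : ∃ t, IsRSF L t ∧ shift d t = s := by
  refine ⟨s.map (Prod.map (· - d) id), ?_, ?_⟩
  · rw [isRSF_iff_pairwise] at hs ⊢
    refine ⟨?_, List.pairwise_map.2 <| hs.2.imp_of_mem fun hp hq h => ?_⟩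
    · simp only [List.mem_map]
      rintro _ ⟨q, hq, rfl⟩
      have := hs.1 q hq
      have := hd q hq
      simp only [Prod.map_fst, Prod.map_snd, id]
      omega
    · have := hd _ hp
      simp only [Prod.map_fst]
      omega
  · rw [shift, List.map_map]
    conv_rhs => rw [← List.map_id s]
    refine List.map_congr_left fun p hp => ?_
    have := hd p hp
    ext <;> simp only [Function.comp, Prod.map_fst, Prod.map_snd, id]
    omega

def extend (M : ℕ) : Layout (M + 1) ⊕ Fin (M + 1) × Layout M → Layout (M + 2)
  | .inl t => ⟨shift 1 t, isRSF_shift t.2⟩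
  | .inr (j, t) =>
      ⟨(1, j + 1) :: shift 2 t,
        isRSF_cons_iff.2 ⟨⟨le_rfl, by omega, by omega⟩, add_one_le_of_mem_shift t.2,
          isRSF_shift t.2⟩⟩

theorem extend_injective (M : ℕ) : Function.Injective (extend M) := by
  rintro (t | ⟨j, t⟩) (t' | ⟨j', t'⟩) h <;> simp only [extend, Subtype.mk.injEq] at h
  · exact congrArg Sum.inl (Subtype.ext (shift_injective 1 h))
  · have := add_one_le_of_mem_shift t.2 _ (h ▸ List.mem_cons_self)
    simp at this
  · have := add_one_le_of_mem_shift t'.2 _ (h ▸ List.mem_cons_self)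
    simp at this
  · obtain ⟨hj, ht⟩ := List.cons.inj h
    have : j = j' := Fin.ext (by simpa using hj)
    rw [this, Subtype.ext (shift_injective 2 ht)]

theorem extend_surjective (M : ℕ) : Function.Surjective (extend M) := by
  rintro ⟨_ | ⟨⟨k, l⟩, t⟩, hs⟩
  · exact ⟨.inl ⟨[], isRSF_nil _⟩, rfl⟩
  obtain ⟨hkl, hkt, ht⟩ := isRSF_cons_iff.1 hs
  by_cases hk : k = 1
  · subst hk
    obtain ⟨t', ht', rfl⟩ := exists_shift_eq_of_isRSF ht hkt
    refine ⟨.inr (⟨l - 1, by omega⟩, ⟨t', ht'⟩), Subtype.ext ?_⟩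
    simp only [extend, List.cons.injEq, Prod.mk.injEq, and_true, true_and]
    omega
  · have hpos : ∀ p ∈ (k, l) :: t, 1 + 1 ≤ p.1 :=
      List.forall_mem_cons.2 ⟨by simp only; omega, fun p hp => by have := hkt p hp; omega⟩
    obtain ⟨s', hs', hs's⟩ := exists_shift_eq_of_isRSF (L := M + 1) hs hpos
    exact ⟨.inl ⟨s', hs'⟩, Subtype.ext hs's⟩

noncomputable def extendEquiv (M : ℕ) : Layout (M + 1) ⊕ Fin (M + 1) × Layout M ≃ Layout (M + 2) :=
  Equiv.ofBijective (extend M) ⟨extend_injective M, extend_surjective M⟩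

instance finite_layout (L : ℕ) : Finite (Layout L) := by
  induction L using Nat.twoStepInduction with
  | zero | one => exact Nat.finite_of_card_ne_zero (by rw [← numRSF, numRSF_of_le_one] <;> simp)
  | more M _ _ => exact Finite.of_equiv _ (extendEquiv M)

theorem numRSF_add_two (M : ℕ) : numRSF (M + 2) = numRSF (M + 1) + (M + 1) * numRSF M := by
  rw [numRSF, ← Nat.card_congr (extendEquiv M), Nat.card_sum, Nat.card_prod, Nat.card_fin]
  rfl

end RSF

/-- The number `R L` of RSF layouts on `L` qubits satisfies `R 0 = R 1 = 1` and
the recurrence `R (L+1) = R L + L * R (L-1)` for every `L ≥ 1`. -/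
theorem numRSF_recurrence :
    numRSF 0 = 1 ∧ numRSF 1 = 1 ∧
      ∀ L : ℕ, 1 ≤ L → numRSF (L + 1) = numRSF L + L * numRSF (L - 1) := by
  refine ⟨RSF.numRSF_of_le_one zero_le_one, RSF.numRSF_of_le_one le_rfl, ?_⟩
  rintro (_ | M) hL
  · omega
  · exact RSF.numRSF_add_two M
end

section
/- For every RSF layout ((k_1,l_1),…,(k_n,l_n)) on L qubits, the total number of gates Σ_{i=1}^{n} l_i is at most ⌊L²/4⌋. Moreover, this bound is attained: the sequence ((2i−1, L−2i+1)) for i = 1,…,⌊L/2⌋ is an RSF layout on L qubits with Σ_i l_i = ⌊L²/4⌋. -/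
/-- The maximal RSF layout on `L` qubits: the sequence `((2i-1, L-2i+1))` for
`i = 1, …, ⌊L/2⌋`, written with `i = j + 1`, `j = 0, …, ⌊L/2⌋ - 1`. -/
def maxLayout (L : ℕ) : List (ℕ × ℕ) :=
  (List.range (L / 2)).map fun j => (2 * j + 1, L - (2 * j + 1))

/-!
Follow a layout diagonal by diagonal. If its first diagonal starts at `k ≥ c` it holds at most
`L - c` gates, and the remaining diagonals start at `≥ c + 2`; so with `n = L + 1 - c` the gate
count `f n` obeys `f n ≤ (n - 1) + f (n - 2)`, which telescopes to `⌊n²/4⌋`. The layout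
`((2i-1, L-2i+1))` meets every step with equality:
`Σ_{j<⌊L/2⌋} (L-2j-1) = ⌊L/2⌋⌈L/2⌉ = ⌊L²/4⌋`.
-/

theorem Nat.sub_two_sq_div_four_add_sub_one_le (n : ℕ) :
    (n - 2) ^ 2 / 4 + (n - 1) ≤ n ^ 2 / 4 := by
  obtain _ | _ | m := n
  · simp
  · simp
  · rw [show (m + 2) ^ 2 = m ^ 2 + (m + 1) * 4 by ring, Nat.add_mul_div_right _ _ four_pos]
    simp

theorem Nat.sq_div_four_eq_div_two_mul (n : ℕ) : n ^ 2 / 4 = n / 2 * (n - n / 2) := by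
  obtain ⟨m, rfl | rfl⟩ := Nat.even_or_odd' n
  · rw [show 2 * m / 2 = m by omega, show 2 * m - m = m by omega,
      show (2 * m) ^ 2 = m * m * 4 by ring, Nat.mul_div_cancel _ four_pos]
  · rw [show (2 * m + 1) / 2 = m by omega, show 2 * m + 1 - m = m + 1 by omega,
      show (2 * m + 1) ^ 2 = 1 + m * (m + 1) * 4 by ring, Nat.add_mul_div_right _ _ four_pos]
    simp

theorem sum_range_map_sub_odd {L n : ℕ} (h : 2 * n ≤ L) :
    ((List.range n).map fun j => L - (2 * j + 1)).sum = n * (L - n) := by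
  induction n with
  | zero => simp
  | succ n ih =>
    rw [List.range_succ, List.map_append, List.sum_append, ih (by omega)]
    simp only [List.map_cons, List.map_nil, List.sum_cons, List.sum_nil]
    obtain ⟨d, rfl⟩ := Nat.exists_eq_add_of_le h
    rw [show 2 * (n + 1) + d - n = n + 2 + d by omega,
      show 2 * (n + 1) + d - (n + 1) = n + 1 + d by omega,
      show 2 * (n + 1) + d - (2 * n + 1) = d + 1 by omega]
    ring

theorem sum_snd_le_of_isChain {L c : ℕ} {s : List (ℕ × ℕ)}
    (hs : s.IsChain fun p q => p.1 + 2 ≤ q.1) (hc : ∀ p ∈ s.head?, c ≤ p.1)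
    (hl : ∀ p ∈ s, p.2 ≤ L - p.1) : (s.map Prod.snd).sum ≤ (L + 1 - c) ^ 2 / 4 := by
  induction s generalizing c with
  | nil => simp
  | cons p t ih =>
    rw [List.isChain_cons] at hs
    have hcp : c ≤ p.1 := hc p rfl
    have htail := ih hs.2 (c := c + 2) (fun q hq => (hs.1 q hq).trans' (by omega))
      (fun q hq => hl q (List.mem_cons_of_mem p hq))
    have hp : p.2 ≤ L - c := (hl p List.mem_cons_self).trans (by omega)
    calc (p.2 :: t.map Prod.snd).sum
        ≤ (L + 1 - c - 2) ^ 2 / 4 + (L + 1 - c - 1) := by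
          rw [List.sum_cons, Nat.sub_sub, Nat.sub_sub]
          omega
      _ ≤ (L + 1 - c) ^ 2 / 4 := Nat.sub_two_sq_div_four_add_sub_one_le _

theorem IsRSF.sum_snd_le {L : ℕ} {s : List (ℕ × ℕ)} (hs : IsRSF L s) :
    (s.map Prod.snd).sum ≤ L ^ 2 / 4 := by
  simpa using sum_snd_le_of_isChain hs.2 (fun p hp => (hs.1 p (List.mem_of_mem_head? hp)).1)
    (fun p hp => (hs.1 p hp).2.2)

theorem isRSF_maxLayout (L : ℕ) : IsRSF L (maxLayout L) := by
  refine ⟨?_, ?_⟩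
  · simp only [maxLayout, List.mem_map, List.mem_range]
    rintro _ ⟨j, hj, rfl⟩
    omega
  · rw [maxLayout, List.Chain', List.isChain_map, List.isChain_range]
    intro m _
    dsimp only
    omega

theorem sum_snd_maxLayout (L : ℕ) : ((maxLayout L).map Prod.snd).sum = L ^ 2 / 4 := by
  rw [maxLayout, List.map_map, Nat.sq_div_four_eq_div_two_mul]
  exact sum_range_map_sub_odd (by omega)

/-- Every RSF layout on `L` qubits has at most `⌊L²/4⌋` gates in total, and this
bound is attained by the layout `((2i-1, L-2i+1))_{i=1,…,⌊L/2⌋}`. -/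
theorem rsf_gate_count_le (L : ℕ) :
    (∀ s : List (ℕ × ℕ), IsRSF L s → (s.map Prod.snd).sum ≤ L ^ 2 / 4) ∧
      IsRSF L (maxLayout L) ∧ ((maxLayout L).map Prod.snd).sum = L ^ 2 / 4 :=
  ⟨fun _ hs => hs.sum_snd_le, isRSF_maxLayout L, sum_snd_maxLayout L⟩
end

section
/- For any two matchgates U, U' there exist matchgates V, V' such that (U ⊗ I₂)·(I₂ ⊗ U')·e₀ = (I₂ ⊗ V)·(V' ⊗ I₂)·e₀, where e₀ ∈ ℂ⁸ is the standard basis vector |000⟩. Conversely, for any two matchgates V, V' there exist matchgates U, U' satisfying the same equality. (The left-right move for matchgates acting on the state |000⟩.) -/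
open Kronecker

/-- A matchgate: a 4×4 unitary `G(A,B)` built from 2×2 unitaries `A`, `B` with
`det A = det B`, where `A` acts on the even-parity subspace span{|00⟩,|11⟩} and
`B` on the odd-parity subspace span{|01⟩,|10⟩}. -/
def IsMatchgate (G : Matrix (Fin 4) (Fin 4) ℂ) : Prop :=
  ∃ A B : Matrix (Fin 2) (Fin 2) ℂ,
    A ∈ Matrix.unitaryGroup (Fin 2) ℂ ∧ B ∈ Matrix.unitaryGroup (Fin 2) ℂ ∧
    A.det = B.det ∧
    G = !![A 0 0, 0,     0,     A 0 1;
           0,     B 0 0, B 0 1, 0;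
           0,     B 1 0, B 1 1, 0;
           A 1 0, 0,     0,     A 1 1]

/-- A two-qubit gate applied to qubits (1,2) of three qubits (lexicographic ordering). -/
noncomputable def gate12 (U : Matrix (Fin 4) (Fin 4) ℂ) : Matrix (Fin 8) (Fin 8) ℂ :=
  (Matrix.reindex (finProdFinEquiv.trans (finCongr (by norm_num)))
      (finProdFinEquiv.trans (finCongr (by norm_num))))
    (U ⊗ₖ (1 : Matrix (Fin 2) (Fin 2) ℂ))

/-- A two-qubit gate applied to qubits (2,3) of three qubits (lexicographic ordering). -/
noncomputable def gate23 (U : Matrix (Fin 4) (Fin 4) ℂ) : Matrix (Fin 8) (Fin 8) ℂ :=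
  (Matrix.reindex (finProdFinEquiv.trans (finCongr (by norm_num)))
      (finProdFinEquiv.trans (finCongr (by norm_num))))
    ((1 : Matrix (Fin 2) (Fin 2) ℂ) ⊗ₖ U)

/-- The state |000⟩ of three qubits. -/
def e0 : Fin 8 → ℂ := fun i => if i = 0 then 1 else 0

/-!
Applied to `|000⟩`, each of the two products only sees one column of each `2 × 2` block it uses,
and yields `w|000⟩ + x|011⟩ + y|101⟩ + z|110⟩` where, for unit vectors `(r, s)`, `(a, c)`, `(b, d)`
of `ℂ²`, `(w, z, x, y) = (r a, r c, s b, s d)` on the left and `(w, x, y, z)` is that tuple on the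
right. Every unit vector of `ℂ⁴` factors in this way and every unit vector of `ℂ²` is a column of a
matrix in `SU(2)`, so both products reach exactly the unit vectors of the even-parity subspace.
-/

open Matrix Complex ComplexConjugate

def matchgate (A B : Matrix (Fin 2) (Fin 2) ℂ) : Matrix (Fin 4) (Fin 4) ℂ :=
  !![A 0 0, 0,     0,     A 0 1;
     0,     B 0 0, B 0 1, 0;
     0,     B 1 0, B 1 1, 0;
     A 1 0, 0,     0,     A 1 1]

theorem isMatchgate_matchgate {A B : Matrix (Fin 2) (Fin 2) ℂ}
    (hA : A ∈ specialUnitaryGroup (Fin 2) ℂ) (hB : B ∈ specialUnitaryGroup (Fin 2) ℂ) :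
    IsMatchgate (matchgate A B) := by
  rw [mem_specialUnitaryGroup_iff] at hA hB
  exact ⟨A, B, hA.1, hB.1, hA.2.trans hB.2.symm, rfl⟩

theorem normSq_add_normSq_of_mem_unitaryGroup {A : Matrix (Fin 2) (Fin 2) ℂ}
    (hA : A ∈ unitaryGroup (Fin 2) ℂ) (j : Fin 2) :
    normSq (A 0 j) + normSq (A 1 j) = 1 := by
  have h := congrFun (congrFun (mem_unitaryGroup_iff'.mp hA) j) j
  simp only [mul_apply, star_apply, Fin.sum_univ_two, one_apply_eq, RCLike.star_def,
    ← normSq_eq_conj_mul_self] at h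
  exact_mod_cast h

def su2OfCol (a c : ℂ) : Matrix (Fin 2) (Fin 2) ℂ :=
  !![a, -conj c; c, conj a]

theorem star_su2OfCol_mul_self (a c : ℂ) :
    star (su2OfCol a c) * su2OfCol a c = (normSq a + normSq c : ℂ) • 1 := by
  ext i j
  fin_cases i <;> fin_cases j <;>
    simp [su2OfCol, mul_apply, Fin.sum_univ_two, star_apply, one_apply,
      ← normSq_eq_conj_mul_self] <;>
    ring

theorem det_su2OfCol (a c : ℂ) : (su2OfCol a c).det = normSq a + normSq c := by
  simp [su2OfCol, det_fin_two_of, mul_conj, ← normSq_eq_conj_mul_self]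

theorem su2OfCol_mem_specialUnitaryGroup {a c : ℂ} (h : normSq a + normSq c = 1) :
    su2OfCol a c ∈ specialUnitaryGroup (Fin 2) ℂ := by
  have h' : (normSq a + normSq c : ℂ) = 1 := by exact_mod_cast h
  rw [mem_specialUnitaryGroup_iff, mem_unitaryGroup_iff', star_su2OfCol_mul_self, det_su2OfCol,
    h', one_smul]
  exact ⟨rfl, rfl⟩

theorem exists_mem_specialUnitaryGroup_col_eq {a c : ℂ} (h : normSq a + normSq c = 1)
    (j : Fin 2) : ∃ A ∈ specialUnitaryGroup (Fin 2) ℂ, A 0 j = a ∧ A 1 j = c := by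
  fin_cases j
  · exact ⟨su2OfCol a c, su2OfCol_mem_specialUnitaryGroup h, rfl, rfl⟩
  · have h' : normSq (conj c) + normSq (-conj a) = 1 := by
      rw [normSq_neg, normSq_conj, normSq_conj, add_comm, h]
    exact ⟨su2OfCol (conj c) (-conj a), su2OfCol_mem_specialUnitaryGroup h',
      by simp [su2OfCol], by simp [su2OfCol]⟩

theorem exists_mul_unit_pair (p q : ℂ) :
    ∃ r a c : ℂ, normSq a + normSq c = 1 ∧ p = r * a ∧ q = r * c ∧
      normSq r = normSq p + normSq q := by
  rcases (add_nonneg (normSq_nonneg p) (normSq_nonneg q)).eq_or_lt with hzero | hpos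
  · obtain ⟨hp, hq⟩ :=
      (add_eq_zero_iff_of_nonneg (normSq_nonneg p) (normSq_nonneg q)).mp hzero.symm
    exact ⟨0, 1, 0, by simp, by simp [normSq_eq_zero.mp hp], by simp [normSq_eq_zero.mp hq],
      by simp [← hzero]⟩
  · set r : ℂ := ((√(normSq p + normSq q) : ℝ) : ℂ)
    have hr : normSq r = normSq p + normSq q := by
      simp only [r, normSq_ofReal, Real.mul_self_sqrt hpos.le]
    have hr0 : r ≠ 0 := by
      rw [← normSq_pos, hr]; exact hpos
    refine ⟨r, p / r, q / r, ?_, by field_simp, by field_simp, hr⟩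
    rw [normSq_div, normSq_div, ← add_div, hr, div_self hpos.ne']

/-- The state `w|000⟩ + x|011⟩ + y|101⟩ + z|110⟩`. -/
def evenState (w x y z : ℂ) : Fin 8 → ℂ := ![w, 0, 0, x, 0, y, z, 0]

def evenUnitStates : Set (Fin 8 → ℂ) :=
  {v | ∃ w x y z : ℂ, normSq w + normSq x + normSq y + normSq z = 1 ∧ evenState w x y z = v}

theorem gate12_mul_gate23_mulVec_e0 (A B A' B' : Matrix (Fin 2) (Fin 2) ℂ) :
    (gate12 (matchgate A B) * gate23 (matchgate A' B')) *ᵥ e0 =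
      evenState (A 0 0 * A' 0 0) (B 0 0 * A' 1 0) (B 1 0 * A' 1 0) (A 1 0 * A' 0 0) := by
  ext i
  fin_cases i <;>
    simp [gate12, gate23, matchgate, evenState, e0, mulVec, dotProduct, mul_apply,
      Fin.sum_univ_eight, finProdFinEquiv, Fin.divNat, Fin.modNat, one_apply]

theorem gate23_mul_gate12_mulVec_e0 (C D E F : Matrix (Fin 2) (Fin 2) ℂ) :
    (gate23 (matchgate C D) * gate12 (matchgate E F)) *ᵥ e0 =
      evenState (C 0 0 * E 0 0) (C 1 0 * E 0 0) (D 0 1 * E 1 0) (D 1 1 * E 1 0) := by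
  ext i
  fin_cases i <;>
    simp [gate12, gate23, matchgate, evenState, e0, mulVec, dotProduct, mul_apply,
      Fin.sum_univ_eight, finProdFinEquiv, Fin.divNat, Fin.modNat, one_apply]

def leftStates : Set (Fin 8 → ℂ) :=
  {v | ∃ U U', IsMatchgate U ∧ IsMatchgate U' ∧ (gate12 U * gate23 U') *ᵥ e0 = v}

def rightStates : Set (Fin 8 → ℂ) :=
  {v | ∃ V V', IsMatchgate V ∧ IsMatchgate V' ∧ (gate23 V * gate12 V') *ᵥ e0 = v}

theorem leftStates_eq_evenUnitStates : leftStates = evenUnitStates := by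
  ext v
  constructor
  · rintro ⟨U, U', ⟨A, B, hA, hB, -, rfl⟩, ⟨A', B', hA', -, -, rfl⟩, rfl⟩
    refine ⟨_, _, _, _, ?_, (gate12_mul_gate23_mulVec_e0 A B A' B').symm⟩
    simp only [normSq_mul]
    linear_combination normSq (A' 0 0) * normSq_add_normSq_of_mem_unitaryGroup hA 0 +
      normSq (A' 1 0) * normSq_add_normSq_of_mem_unitaryGroup hB 0 +
      normSq_add_normSq_of_mem_unitaryGroup hA' 0
  · rintro ⟨w, x, y, z, h, rfl⟩
    obtain ⟨r, a, c, hac, rfl, rfl, hr⟩ := exists_mul_unit_pair w z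
    obtain ⟨s, b, d, hbd, rfl, rfl, hs⟩ := exists_mul_unit_pair x y
    obtain ⟨A, hA, rfl, rfl⟩ := exists_mem_specialUnitaryGroup_col_eq hac 0
    obtain ⟨B, hB, rfl, rfl⟩ := exists_mem_specialUnitaryGroup_col_eq hbd 0
    obtain ⟨A', hA', hr', hs'⟩ :=
      exists_mem_specialUnitaryGroup_col_eq (a := r) (c := s) (by linarith) 0
    refine ⟨matchgate A B, matchgate A' 1, isMatchgate_matchgate hA hB,
      isMatchgate_matchgate hA' (one_mem _), ?_⟩
    rw [gate12_mul_gate23_mulVec_e0, hr', hs']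
    simp only [mul_comm]

theorem rightStates_eq_evenUnitStates : rightStates = evenUnitStates := by
  ext v
  constructor
  · rintro ⟨V, V', ⟨C, D, hC, hD, -, rfl⟩, ⟨E, F, hE, -, -, rfl⟩, rfl⟩
    refine ⟨_, _, _, _, ?_, (gate23_mul_gate12_mulVec_e0 C D E F).symm⟩
    simp only [normSq_mul]
    linear_combination normSq (E 0 0) * normSq_add_normSq_of_mem_unitaryGroup hC 0 +
      normSq (E 1 0) * normSq_add_normSq_of_mem_unitaryGroup hD 1 +
      normSq_add_normSq_of_mem_unitaryGroup hE 0
  · rintro ⟨w, x, y, z, h, rfl⟩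
    obtain ⟨r, a, c, hac, rfl, rfl, hr⟩ := exists_mul_unit_pair w x
    obtain ⟨s, b, d, hbd, rfl, rfl, hs⟩ := exists_mul_unit_pair y z
    obtain ⟨C, hC, rfl, rfl⟩ := exists_mem_specialUnitaryGroup_col_eq hac 0
    obtain ⟨D, hD, rfl, rfl⟩ := exists_mem_specialUnitaryGroup_col_eq hbd 1
    obtain ⟨E, hE, hr', hs'⟩ :=
      exists_mem_specialUnitaryGroup_col_eq (a := r) (c := s) (by linarith) 0
    refine ⟨matchgate C D, matchgate E 1, isMatchgate_matchgate hC hD,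
      isMatchgate_matchgate hE (one_mem _), ?_⟩
    rw [gate23_mul_gate12_mulVec_e0, hr', hs']
    simp only [mul_comm]

/-- The left-right move for matchgates acting on |000⟩: for matchgates `U, U'`
there are matchgates `V, V'` with `(U ⊗ I)(I ⊗ U')|000⟩ = (I ⊗ V)(V' ⊗ I)|000⟩`,
and conversely. -/
theorem matchgate_left_right_move :
    (∀ U U' : Matrix (Fin 4) (Fin 4) ℂ, IsMatchgate U → IsMatchgate U' →
      ∃ V V' : Matrix (Fin 4) (Fin 4) ℂ, IsMatchgate V ∧ IsMatchgate V' ∧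
        (gate12 U * gate23 U').mulVec e0 = (gate23 V * gate12 V').mulVec e0) ∧
    (∀ V V' : Matrix (Fin 4) (Fin 4) ℂ, IsMatchgate V → IsMatchgate V' →
      ∃ U U' : Matrix (Fin 4) (Fin 4) ℂ, IsMatchgate U ∧ IsMatchgate U' ∧
        (gate12 U * gate23 U').mulVec e0 = (gate23 V * gate12 V').mulVec e0) := by
  have h : leftStates = rightStates :=
    leftStates_eq_evenUnitStates.trans rightStates_eq_evenUnitStates.symm
  constructor
  · intro U U' hU hU'
    obtain ⟨V, V', hV, hV', hv⟩ := (Set.ext_iff.mp h _).mp ⟨U, U', hU, hU', rfl⟩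
    exact ⟨V, V', hV, hV', hv.symm⟩
  · intro V V' hV hV'
    obtain ⟨U, U', hU, hU', hv⟩ := (Set.ext_iff.mp h _).mpr ⟨V, V', hV, hV', rfl⟩
    exact ⟨U, U', hU, hU', hv⟩
end

section
/- For every 6×6 real orthogonal matrix R with det R = 1, there exist 4×4 real orthogonal matrices R₁, R₂, R₃, each with determinant 1, such that R = (I₂ ⊕ R₁)·(R₂ ⊕ I₂)·(I₂ ⊕ R₃), where I₂ ⊕ M denotes the 6×6 block-diagonal matrix with the 2×2 identity in the top-left block and M in the bottom-right block, and M ⊕ I₂ the block-diagonal matrix with M in the top-left and the 2×2 identity in the bottom-right. -/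
/-!
Write `R = [[A, B], [C, D]]` with respect to `α ⊕ (β ⊕ γ)`. Since `|α| ≤ |β|`, the kernel of `B`
has dimension at least `|γ|`; choose `Q₃` whose last `|γ|` columns `U` are orthonormal vectors in
it. Then `R (0, U) = (0, D U)`, so the columns of `D U` are orthonormal and are the last columns of
some `Q₁`. The orthogonal matrix `(I ⊕ Q₁)ᵀ R (I ⊕ Q₃)` fixes the last `|γ|` basis vectors, hence
also has them as its last rows, i.e. it is `Q₂ ⊕ I`. Completing the orthonormal families leaves a
free column in the `β` block whose sign makes every determinant `1`. For `SO(6)` take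
`α = β = γ = Fin 2`.
-/

/-- The 6×6 block-diagonal matrix `I₂ ⊕ M` with the 2×2 identity in the top-left
block and the 4×4 matrix `M` in the bottom-right block. -/
noncomputable def padBottomRight (M : Matrix (Fin 4) (Fin 4) ℝ) : Matrix (Fin 6) (Fin 6) ℝ :=
  (Matrix.reindex (finSumFinEquiv.trans (finCongr (by norm_num)))
      (finSumFinEquiv.trans (finCongr (by norm_num))))
    (Matrix.fromBlocks (1 : Matrix (Fin 2) (Fin 2) ℝ) 0 0 M)

/-- The 6×6 block-diagonal matrix `M ⊕ I₂` with the 4×4 matrix `M` in the top-left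
block and the 2×2 identity in the bottom-right block. -/
noncomputable def padTopLeft (M : Matrix (Fin 4) (Fin 4) ℝ) : Matrix (Fin 6) (Fin 6) ℝ :=
  (Matrix.reindex (finSumFinEquiv.trans (finCongr (by norm_num)))
      (finSumFinEquiv.trans (finCongr (by norm_num))))
    (Matrix.fromBlocks M 0 0 (1 : Matrix (Fin 2) (Fin 2) ℝ))

namespace Matrix

section CommRing

variable {R : Type*} [CommRing R] {α β γ : Type*}

theorem fromBlocks_mem_orthogonalGroup_iff [Fintype α] [Fintype β] [DecidableEq α]
    [DecidableEq β] {A : Matrix α α R} {D : Matrix β β R} :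
    fromBlocks A 0 0 D ∈ orthogonalGroup (α ⊕ β) R ↔
      A ∈ orthogonalGroup α R ∧ D ∈ orthogonalGroup β R := by
  simp [mem_orthogonalGroup_iff, fromBlocks_transpose, fromBlocks_multiply, ← fromBlocks_one,
    fromBlocks_inj]

theorem fromBlocks_one_mem_specialOrthogonalGroup_iff [Fintype α] [Fintype β] [DecidableEq α]
    [DecidableEq β] {D : Matrix β β R} :
    fromBlocks (1 : Matrix α α R) 0 0 D ∈ specialOrthogonalGroup (α ⊕ β) R ↔
      D ∈ specialOrthogonalGroup β R := by
  simp [mem_specialOrthogonalGroup_iff, fromBlocks_mem_orthogonalGroup_iff, det_fromBlocks_zero₂₁,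
    one_mem]

theorem fromBlocks_mem_specialOrthogonalGroup_one_iff [Fintype α] [Fintype β] [DecidableEq α]
    [DecidableEq β] {A : Matrix α α R} :
    fromBlocks A 0 0 (1 : Matrix β β R) ∈ specialOrthogonalGroup (α ⊕ β) R ↔
      A ∈ specialOrthogonalGroup α R := by
  simp [mem_specialOrthogonalGroup_iff, fromBlocks_mem_orthogonalGroup_iff, one_mem]

theorem transpose_mem_specialOrthogonalGroup [Fintype α] [DecidableEq α] {A : Matrix α α R}
    (hA : A ∈ specialOrthogonalGroup α R) : Aᵀ ∈ specialOrthogonalGroup α R := by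
  refine mem_specialOrthogonalGroup_iff.2 ⟨(mem_orthogonalGroup_iff ..).2 ?_, ?_⟩
  · rw [transpose_transpose, ← mem_orthogonalGroup_iff']
    exact hA.1
  · rw [det_transpose]
    exact hA.2

theorem reindex_mem_specialOrthogonalGroup_iff [Fintype α] [Fintype β] [DecidableEq α]
    [DecidableEq β] (e : α ≃ β) {A : Matrix α α R} :
    reindex e e A ∈ specialOrthogonalGroup β R ↔ A ∈ specialOrthogonalGroup α R := by
  rw [mem_specialOrthogonalGroup_iff, mem_specialOrthogonalGroup_iff, det_reindex_self,
    mem_orthogonalGroup_iff, mem_orthogonalGroup_iff, transpose_reindex, ← coe_reindexAlgEquiv R R,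
    ← map_mul, ← map_one (reindexAlgEquiv R R e), (reindexAlgEquiv R R e).injective.eq_iff]

theorem transpose_mul_eq_of_mul_eq [Fintype α] [DecidableEq α] {C : Matrix α α R}
    (hC : C ∈ orthogonalGroup α R) {X : Matrix α β R} (hX : C * X = X) : Cᵀ * X = X := by
  conv_lhs => rw [← hX, ← Matrix.mul_assoc, (mem_orthogonalGroup_iff' ..).1 hC, Matrix.one_mul]

theorem transpose_mul_mul_self_of_mem_orthogonalGroup [Fintype α] [DecidableEq α]
    {C : Matrix α α R} (hC : C ∈ orthogonalGroup α R) (X : Matrix α β R) :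
    (C * X)ᵀ * (C * X) = Xᵀ * X := by
  rw [transpose_mul, Matrix.mul_assoc, ← Matrix.mul_assoc Cᵀ, (mem_orthogonalGroup_iff' ..).1 hC,
    Matrix.one_mul]

theorem transpose_fromRows_zero_mul_self [Fintype α] [Fintype β] (X : Matrix β γ R) :
    (fromRows (0 : Matrix α γ R) X)ᵀ * fromRows (0 : Matrix α γ R) X = Xᵀ * X := by
  rw [transpose_fromRows, fromCols_mul_fromRows, transpose_zero, Matrix.zero_mul, zero_add]

theorem mul_fromRows_zero_one [Fintype β] [Fintype γ] [DecidableEq γ] (A : Matrix α (β ⊕ γ) R) :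
    A * fromRows (0 : Matrix β γ R) (1 : Matrix γ γ R) = A.toCols₂ := by
  ext i j
  simp [mul_apply, one_apply]

theorem fromRows_zero_fromRows_zero_submatrix_sumAssoc {δ : Type*} (X : Matrix γ δ R) :
    (fromRows (0 : Matrix α δ R) (fromRows (0 : Matrix β δ R) X)).submatrix
      (Equiv.sumAssoc α β γ) id = fromRows 0 X := by
  ext ((a | b) | c) j <;> rfl

theorem eq_fromBlocks_of_mul_fromRows_zero_one [Fintype α] [Fintype β] [DecidableEq α]
    [DecidableEq β] {C : Matrix (α ⊕ β) (α ⊕ β) R} (hC : C ∈ orthogonalGroup (α ⊕ β) R)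
    (hcol : C * fromRows (0 : Matrix α β R) (1 : Matrix β β R) = fromRows 0 1) :
    C = fromBlocks C.toBlocks₁₁ 0 0 1 := by
  have hrow := transpose_mul_eq_of_mul_eq hC hcol
  rw [← fromBlocks_toBlocks C] at hcol hrow
  conv_lhs => rw [← fromBlocks_toBlocks C]
  simp only [fromBlocks_transpose, fromBlocks_mul_fromRows, Matrix.mul_zero, Matrix.mul_one,
    zero_add, fromRows_inj.eq_iff, transpose_eq_zero, transpose_eq_one] at hcol hrow
  rw [hcol.1, hcol.2, hrow.1]

theorem exists_eq_reindex_sumAssoc_fromBlocks_one [Fintype α] [Fintype β] [Fintype γ]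
    [DecidableEq α] [DecidableEq β] [DecidableEq γ] {C : Matrix (α ⊕ (β ⊕ γ)) (α ⊕ (β ⊕ γ)) R}
    (hC : C ∈ specialOrthogonalGroup _ R)
    (hcol : C * fromRows (0 : Matrix α γ R) (fromRows (0 : Matrix β γ R) (1 : Matrix γ γ R)) =
      fromRows 0 (fromRows 0 1)) :
    ∃ Q ∈ specialOrthogonalGroup (α ⊕ β) R,
      C = reindex (Equiv.sumAssoc α β γ) (Equiv.sumAssoc α β γ) (fromBlocks Q 0 0 1) := by
  set C' := reindex (Equiv.sumAssoc α β γ).symm (Equiv.sumAssoc α β γ).symm C with hC'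
  have hC'mem : C' ∈ specialOrthogonalGroup _ R :=
    (reindex_mem_specialOrthogonalGroup_iff _).2 hC
  have hC'col : C' * fromRows (0 : Matrix (α ⊕ β) γ R) (1 : Matrix γ γ R) = fromRows 0 1 := by
    rw [← fromRows_zero_fromRows_zero_submatrix_sumAssoc, hC', reindex_apply, Equiv.symm_symm,
      submatrix_mul_equiv, hcol]
  have hblocks := eq_fromBlocks_of_mul_fromRows_zero_one hC'mem.1 hC'col
  refine ⟨C'.toBlocks₁₁, fromBlocks_mem_specialOrthogonalGroup_one_iff.1 (hblocks ▸ hC'mem), ?_⟩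
  rw [← hblocks, hC', reindex_apply, reindex_apply, submatrix_submatrix]
  simp

theorem exists_mem_specialOrthogonalGroup_toCols₂_eq_toCols₂ [Fintype β] [Fintype γ]
    [DecidableEq β] [DecidableEq γ] [Nonempty β]
    {Q : Matrix (β ⊕ γ) (β ⊕ γ) R} (hQ : Q ∈ orthogonalGroup (β ⊕ γ) R) :
    ∃ Q' ∈ specialOrthogonalGroup (β ⊕ γ) R, Q'.toCols₂ = Q.toCols₂ := by
  obtain ⟨i⟩ := ‹Nonempty β›
  have hdet : Q.det * Q.det = 1 := by
    simpa using congrArg det ((mem_orthogonalGroup_iff ..).1 hQ)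
  -- `det Q = ±1`, so rescaling the column `inl i` by `det Q` turns the determinant into `1`.
  let D : Matrix β β R := diagonal (Pi.mulSingle i Q.det)
  have hD : D ∈ orthogonalGroup β R := by
    rw [mem_orthogonalGroup_iff, diagonal_transpose, diagonal_mul_diagonal, ← diagonal_one]
    congr 1
    ext j
    by_cases hj : j = i <;> simp [hj, hdet]
  refine ⟨Q * fromBlocks D 0 0 1, mem_specialOrthogonalGroup_iff.2
    ⟨mul_mem hQ (fromBlocks_mem_orthogonalGroup_iff.2 ⟨hD, one_mem _⟩), ?_⟩, ?_⟩
  · simp [D, Finset.prod_pi_mulSingle', hdet]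
  · rw [← mul_fromRows_zero_one, ← mul_fromRows_zero_one, Matrix.mul_assoc,
      fromBlocks_mul_fromRows]
    simp

end CommRing

section Real

variable {α β γ : Type*}

theorem transpose_mul_self_eq_one_iff_orthonormal [Fintype α] [DecidableEq β]
    (V : Matrix α β ℝ) : Vᵀ * V = 1 ↔ Orthonormal ℝ fun j => WithLp.toLp 2 (Vᵀ j) := by
  rw [← gram_eq_one_iff_orthonormal, gram_eq_conjTranspose_mul (EuclideanSpace.basisFun α ℝ)]
  rfl

theorem exists_transpose_mul_self_eq_one_and_mul_eq_zero [Fintype α] [Fintype β] [Fintype γ]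
    [DecidableEq β] [DecidableEq γ] (B : Matrix α β ℝ)
    (hcard : Fintype.card α + Fintype.card γ ≤ Fintype.card β) :
    ∃ U : Matrix β γ ℝ, Uᵀ * U = 1 ∧ B * U = 0 := by
  let K := LinearMap.ker (toEuclideanLin B)
  have hK : Fintype.card γ ≤ Module.finrank ℝ K := by
    change _ ≤ Module.finrank ℝ (LinearMap.ker (toEuclideanLin B))
    have := LinearMap.finrank_range_add_finrank_ker (toEuclideanLin B)
    have := Submodule.finrank_le (LinearMap.range (toEuclideanLin B))
    simp only [finrank_euclideanSpace] at *
    omega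
  let ι : γ ↪ Fin (Module.finrank ℝ K) :=
    (Fintype.equivFin γ).toEmbedding.trans (Fin.castLEEmb hK)
  let v : γ → EuclideanSpace ℝ β := fun j => stdOrthonormalBasis ℝ K (ι j)
  have hv : Orthonormal ℝ v :=
    ((stdOrthonormalBasis ℝ K).orthonormal.comp ι ι.injective).comp_linearIsometry K.subtypeₗᵢ
  refine ⟨of fun i j => v j i, (transpose_mul_self_eq_one_iff_orthonormal _).2 hv, ?_⟩
  ext a j
  have hj : toEuclideanLin B (v j) = 0 := (stdOrthonormalBasis ℝ K (ι j)).2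
  simpa [toLpLin_apply, mulVec, dotProduct, mul_apply] using congrFun (congrArg WithLp.ofLp hj) a

theorem exists_mem_orthogonalGroup_toCols₂_eq [Fintype β] [Fintype γ] [DecidableEq β]
    [DecidableEq γ] (V : Matrix (β ⊕ γ) γ ℝ) (hV : Vᵀ * V = 1) :
    ∃ Q ∈ orthogonalGroup (β ⊕ γ) ℝ, Q.toCols₂ = V := by
  let v : β ⊕ γ → EuclideanSpace ℝ (β ⊕ γ) := Sum.elim 0 fun j => WithLp.toLp 2 (Vᵀ j)
  have hv : Orthonormal ℝ ((Set.range Sum.inr).domRestrict v) := by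
    have := orthonormal_iff_ite.1 ((transpose_mul_self_eq_one_iff_orthonormal V).1 hV)
    rw [orthonormal_iff_ite]
    rintro ⟨_, i, rfl⟩ ⟨_, j, rfl⟩
    simpa [v, Subtype.ext_iff] using this i j
  obtain ⟨b, hb⟩ := hv.exists_orthonormalBasis_extension_of_card_eq (by simp)
  refine ⟨(EuclideanSpace.basisFun _ ℝ).toBasis.toMatrix b,
    (EuclideanSpace.basisFun _ ℝ).toMatrix_orthonormalBasis_mem_orthogonal b, ?_⟩
  ext i j
  simp [Module.Basis.toMatrix_apply, hb (Sum.inr j) ⟨j, rfl⟩, v]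

theorem exists_mem_specialOrthogonalGroup_toCols₂_eq [Fintype β] [Fintype γ] [DecidableEq β]
    [DecidableEq γ] [Nonempty β] (V : Matrix (β ⊕ γ) γ ℝ) (hV : Vᵀ * V = 1) :
    ∃ Q ∈ specialOrthogonalGroup (β ⊕ γ) ℝ, Q.toCols₂ = V := by
  obtain ⟨Q, hQ, rfl⟩ := exists_mem_orthogonalGroup_toCols₂_eq V hV
  exact exists_mem_specialOrthogonalGroup_toCols₂_eq_toCols₂ hQ

end Real

section Decomposition

variable {α β γ : Type*} [Fintype α] [Fintype β] [Fintype γ] [DecidableEq α] [DecidableEq β]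
  [DecidableEq γ] [Nonempty β]

theorem exists_transpose_fromBlocks_one_mul_mul_fromBlocks_one_mul_eq
    (hcard : Fintype.card α ≤ Fintype.card β) {R : Matrix (α ⊕ (β ⊕ γ)) (α ⊕ (β ⊕ γ)) ℝ}
    (hR : R ∈ specialOrthogonalGroup _ ℝ) :
    ∃ Q₁ ∈ specialOrthogonalGroup (β ⊕ γ) ℝ, ∃ Q₃ ∈ specialOrthogonalGroup (β ⊕ γ) ℝ,
      (fromBlocks (1 : Matrix α α ℝ) 0 0 Q₁)ᵀ * R * fromBlocks (1 : Matrix α α ℝ) 0 0 Q₃ *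
          fromRows (0 : Matrix α γ ℝ) (fromRows (0 : Matrix β γ ℝ) (1 : Matrix γ γ ℝ)) =
        fromRows 0 (fromRows 0 1) := by
  obtain ⟨U, hUU, hBU⟩ := exists_transpose_mul_self_eq_one_and_mul_eq_zero (γ := γ) R.toBlocks₁₂
    (by rw [Fintype.card_sum]; omega)
  obtain ⟨Q₃, hQ₃, hQ₃U⟩ := exists_mem_specialOrthogonalGroup_toCols₂_eq U hUU
  have hRU : R * fromRows (0 : Matrix α γ ℝ) U = fromRows 0 (R.toBlocks₂₂ * U) := by
    conv_lhs => rw [← fromBlocks_toBlocks R]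
    rw [fromBlocks_mul_fromRows, hBU]
    simp
  obtain ⟨Q₁, hQ₁, hQ₁W⟩ := exists_mem_specialOrthogonalGroup_toCols₂_eq (R.toBlocks₂₂ * U) (by
    rw [← transpose_fromRows_zero_mul_self (α := α), ← hRU,
      transpose_mul_mul_self_of_mem_orthogonalGroup hR.1, transpose_fromRows_zero_mul_self, hUU])
  refine ⟨Q₁, hQ₁, Q₃, hQ₃, ?_⟩
  calc (fromBlocks (1 : Matrix α α ℝ) 0 0 Q₁)ᵀ * R * fromBlocks (1 : Matrix α α ℝ) 0 0 Q₃ *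
          fromRows (0 : Matrix α γ ℝ) (fromRows (0 : Matrix β γ ℝ) (1 : Matrix γ γ ℝ))
      = (fromBlocks (1 : Matrix α α ℝ) 0 0 Q₁)ᵀ *
          (R * fromRows (0 : Matrix α γ ℝ) Q₃.toCols₂) := by
        rw [Matrix.mul_assoc, Matrix.mul_assoc, fromBlocks_mul_fromRows, mul_fromRows_zero_one Q₃]
        simp
    _ = fromRows 0 (Q₁ᵀ * Q₁.toCols₂) := by
        rw [hQ₃U, hRU, ← hQ₁W, fromBlocks_transpose, fromBlocks_mul_fromRows]
        simp
    _ = fromRows 0 (fromRows 0 1) := by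
        rw [← mul_fromRows_zero_one, ← Matrix.mul_assoc, (mem_orthogonalGroup_iff' ..).1 hQ₁.1,
          Matrix.one_mul]

theorem exists_eq_fromBlocks_one_mul_reindex_fromBlocks_mul_fromBlocks_one
    (hcard : Fintype.card α ≤ Fintype.card β) {R : Matrix (α ⊕ (β ⊕ γ)) (α ⊕ (β ⊕ γ)) ℝ}
    (hR : R ∈ specialOrthogonalGroup _ ℝ) :
    ∃ Q₁ ∈ specialOrthogonalGroup (β ⊕ γ) ℝ, ∃ Q₂ ∈ specialOrthogonalGroup (α ⊕ β) ℝ,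
      ∃ Q₃ ∈ specialOrthogonalGroup (β ⊕ γ) ℝ,
        R = fromBlocks (1 : Matrix α α ℝ) 0 0 Q₁ *
          reindex (Equiv.sumAssoc α β γ) (Equiv.sumAssoc α β γ) (fromBlocks Q₂ 0 0 1) *
            fromBlocks (1 : Matrix α α ℝ) 0 0 Q₃ := by
  obtain ⟨Q₁, hQ₁, Q₃, hQ₃, hfix⟩ :=
    exists_transpose_fromBlocks_one_mul_mul_fromBlocks_one_mul_eq hcard hR
  have hP₁ := (fromBlocks_one_mem_specialOrthogonalGroup_iff (α := α)).2 hQ₁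
  have hP₃ := (fromBlocks_one_mem_specialOrthogonalGroup_iff (α := α)).2 hQ₃
  obtain ⟨Q₂, hQ₂, hC⟩ := exists_eq_reindex_sumAssoc_fromBlocks_one
    (mul_mem (mul_mem (transpose_mem_specialOrthogonalGroup hP₁) hR) hP₃) hfix
  refine ⟨Q₁, hQ₁, Q₂, hQ₂, Q₃ᵀ, transpose_mem_specialOrthogonalGroup hQ₃, ?_⟩
  rw [← hC, show fromBlocks (1 : Matrix α α ℝ) 0 0 Q₃ᵀ = (fromBlocks 1 0 0 Q₃)ᵀ by
    simp [fromBlocks_transpose]]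
  simp only [Matrix.mul_assoc]
  rw [(mem_orthogonalGroup_iff ..).1 hP₃.1, Matrix.mul_one, ← Matrix.mul_assoc,
    (mem_orthogonalGroup_iff ..).1 hP₁.1, Matrix.one_mul]

end Decomposition

end Matrix

open Matrix

def finFourEquiv : Fin 4 ≃ Fin 2 ⊕ Fin 2 := (finSumFinEquiv (m := 2) (n := 2)).symm

def finSixEquiv : Fin 6 ≃ Fin 2 ⊕ (Fin 2 ⊕ Fin 2) :=
  (finSumFinEquiv (m := 2) (n := 4)).symm.trans (Equiv.sumCongr (Equiv.refl _) finFourEquiv)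

theorem reindex_padBottomRight (M : Matrix (Fin 4) (Fin 4) ℝ) :
    reindex finSixEquiv finSixEquiv (padBottomRight M) =
      fromBlocks 1 0 0 (reindex finFourEquiv finFourEquiv M) := by
  ext i j
  fin_cases i <;> fin_cases j <;> rfl

theorem reindex_padTopLeft (M : Matrix (Fin 4) (Fin 4) ℝ) :
    reindex finSixEquiv finSixEquiv (padTopLeft M) =
      reindex (Equiv.sumAssoc _ _ _) (Equiv.sumAssoc _ _ _)
        (fromBlocks (reindex finFourEquiv finFourEquiv M) 0 0 1) := by
  ext i j
  fin_cases i <;> fin_cases j <;> rfl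

/-- Euler-type decomposition of SO(6): every special orthogonal 6×6 matrix `R` can be
written as `R = (I₂ ⊕ R₁)(R₂ ⊕ I₂)(I₂ ⊕ R₃)` with `R₁, R₂, R₃ ∈ SO(4)`. -/
theorem so6_euler_decomposition (R : Matrix (Fin 6) (Fin 6) ℝ)
    (hR : R ∈ Matrix.orthogonalGroup (Fin 6) ℝ) (hdet : R.det = 1) :
    ∃ R₁ R₂ R₃ : Matrix (Fin 4) (Fin 4) ℝ,
      R₁ ∈ Matrix.orthogonalGroup (Fin 4) ℝ ∧ R₁.det = 1 ∧
      R₂ ∈ Matrix.orthogonalGroup (Fin 4) ℝ ∧ R₂.det = 1 ∧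
      R₃ ∈ Matrix.orthogonalGroup (Fin 4) ℝ ∧ R₃.det = 1 ∧
      R = padBottomRight R₁ * padTopLeft R₂ * padBottomRight R₃ := by
  obtain ⟨Q₁, hQ₁, Q₂, hQ₂, Q₃, hQ₃, hdecomp⟩ :=
    exists_eq_fromBlocks_one_mul_reindex_fromBlocks_mul_fromBlocks_one le_rfl
      ((reindex_mem_specialOrthogonalGroup_iff finSixEquiv).2 ⟨hR, hdet⟩)
  have hmem {Q : Matrix (Fin 2 ⊕ Fin 2) (Fin 2 ⊕ Fin 2) ℝ}
      (hQ : Q ∈ specialOrthogonalGroup _ ℝ) :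
      reindex finFourEquiv.symm finFourEquiv.symm Q ∈ specialOrthogonalGroup _ ℝ :=
    (reindex_mem_specialOrthogonalGroup_iff _).2 hQ
  refine ⟨reindex finFourEquiv.symm finFourEquiv.symm Q₁,
    reindex finFourEquiv.symm finFourEquiv.symm Q₂, reindex finFourEquiv.symm finFourEquiv.symm Q₃,
    (hmem hQ₁).1, (hmem hQ₁).2, (hmem hQ₂).1, (hmem hQ₂).2, (hmem hQ₃).1, (hmem hQ₃).2, ?_⟩
  apply (reindex finSixEquiv finSixEquiv).injective
  rw [← coe_reindexAlgEquiv ℝ ℝ finSixEquiv, map_mul, map_mul, coe_reindexAlgEquiv, hdecomp,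
    reindex_padBottomRight, reindex_padTopLeft, reindex_padBottomRight]
  simp
end
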